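/- Let k be a field and f a polynomial automorphism of A^n_k of degree ≥ 2. Then X_f ⊆ I_{f⁻¹}, i.e., the image at infinity of f is contained in the indeterminacy locus of f⁻¹. -/

import Mathlib

open MvPolynomial

/-- Composition of polynomial endomorphisms of affine `n`-space. -/
noncomputable def mvComp {k : Type*} [CommSemiring k] {n : ℕ}
    (g f : Fin n → MvPolynomial (Fin n) k) : Fin n → MvPolynomial (Fin n) k :=
  fun i => MvPolynomial.bind₁ f (g i)

/-- The degree of a polynomial endomorphism of affine `n`-space. -/
noncomputable def mvDeg {k : Type*} [CommSemiring k] {n : ℕ}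
    (f : Fin n → MvPolynomial (Fin n) k) : ℕ :=
  Finset.univ.sup fun i => (f i).totalDegree

/-- The highest homogeneous part of a polynomial endomorphism. -/
noncomputable def topPart {k : Type*} [CommSemiring k] {n : ℕ}
    (f : Fin n → MvPolynomial (Fin n) k) : Fin n → MvPolynomial (Fin n) k :=
  fun i => MvPolynomial.homogeneousComponent (mvDeg f) (f i)

/-! Write `d = deg f`, `e = deg f⁻¹` and `G`, `H` for the top parts of `f`, `f⁻¹`. Substituting `f`
into a monomial of degree `< e` only produces terms of degree `< de`, while in a monomial of degree
`e` only the top parts of the `f_i` reach degree `de`; so the degree-`de` component of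
`f⁻¹_j ∘ f` is `H_j ∘ G`. As `f⁻¹_j ∘ f = X_j` and `de ≥ 2`, this forces `H_j ∘ G = 0`, which
evaluated at `y` is the claim. -/

namespace MvPolynomial

variable {R σ τ : Type*} [CommSemiring R]

theorem totalDegree_pow_le_mul {p : MvPolynomial σ R} {d : ℕ} (hp : p.totalDegree ≤ d) (k : ℕ) :
    (p ^ k).totalDegree ≤ d * k :=
  (totalDegree_pow p k).trans (by rw [mul_comm]; exact Nat.mul_le_mul_right k hp)

theorem homogeneousComponent_add_mul_of_totalDegree_le {p q : MvPolynomial σ R} {a b : ℕ}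
    (hp : p.totalDegree ≤ a) (hq : q.totalDegree ≤ b) :
    homogeneousComponent (a + b) (p * q) =
      homogeneousComponent a p * homogeneousComponent b q := by
  classical
  ext m
  simp only [coeff_homogeneousComponent, coeff_mul]
  split_ifs with hm
  · refine Finset.sum_congr rfl fun x hx => ?_
    have hdeg : x.1.degree + x.2.degree = a + b := by
      rw [← map_add, Finset.HasAntidiagonal.mem_antidiagonal.1 hx, hm]
    by_cases h1 : coeff x.1 p = 0
    · simp [h1]
    by_cases h2 : coeff x.2 q = 0
    · simp [h2]
    have ha : x.1.degree ≤ a := (le_totalDegree (mem_support_iff.2 h1)).trans hp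
    have hb : x.2.degree ≤ b := (le_totalDegree (mem_support_iff.2 h2)).trans hq
    rw [if_pos (by omega), if_pos (by omega)]
  · refine (Finset.sum_eq_zero fun x hx => ?_).symm
    have hdeg : x.1.degree + x.2.degree ≠ a + b := by
      rwa [← map_add, Finset.HasAntidiagonal.mem_antidiagonal.1 hx]
    split_ifs <;> simp_all

theorem homogeneousComponent_mul_pow_of_totalDegree_le {p : MvPolynomial σ R} {d : ℕ}
    (hp : p.totalDegree ≤ d) (k : ℕ) :
    homogeneousComponent (d * k) (p ^ k) = homogeneousComponent d p ^ k := by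
  induction k with
  | zero => simp
  | succ k ih =>
    rw [pow_succ, pow_succ, Nat.mul_succ,
      homogeneousComponent_add_mul_of_totalDegree_le (totalDegree_pow_le_mul hp k) hp, ih]

theorem homogeneousComponent_sum_prod_of_totalDegree_le {ι : Type*} (s : Finset ι)
    {p : ι → MvPolynomial σ R} {d : ι → ℕ} (hp : ∀ i ∈ s, (p i).totalDegree ≤ d i) :
    homogeneousComponent (∑ i ∈ s, d i) (∏ i ∈ s, p i) =
      ∏ i ∈ s, homogeneousComponent (d i) (p i) := by
  classical
  induction s using Finset.induction_on with
  | empty => simp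
  | insert a s ha ih =>
    have hs : (∏ i ∈ s, p i).totalDegree ≤ ∑ i ∈ s, d i :=
      (totalDegree_finsetProd s p).trans
        (Finset.sum_le_sum fun i hi => hp i (Finset.mem_insert_of_mem hi))
    rw [Finset.sum_insert ha, Finset.prod_insert ha, Finset.prod_insert ha,
      homogeneousComponent_add_mul_of_totalDegree_le (hp a (Finset.mem_insert_self a s)) hs,
      ih fun i hi => hp i (Finset.mem_insert_of_mem hi)]

variable {f : σ → MvPolynomial τ R} {d : ℕ}

theorem totalDegree_bind₁_monomial_le (hf : ∀ i, (f i).totalDegree ≤ d) (m : σ →₀ ℕ) (c : R) :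
    (bind₁ f (monomial m c)).totalDegree ≤ d * m.degree := by
  rw [bind₁_monomial, Finsupp.degree_apply, Finset.mul_sum]
  refine (totalDegree_mul _ _).trans ?_
  rw [totalDegree_C, zero_add]
  exact (totalDegree_finsetProd _ _).trans
    (Finset.sum_le_sum fun i _ => totalDegree_pow_le_mul (hf i) _)

theorem homogeneousComponent_mul_bind₁_monomial_of_degree_le (hd : 0 < d)
    (hf : ∀ i, (f i).totalDegree ≤ d) {m : σ →₀ ℕ} {e : ℕ} (hm : m.degree ≤ e) (c : R) :
    homogeneousComponent (d * e) (bind₁ f (monomial m c)) =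
      bind₁ (fun i => homogeneousComponent d (f i)) (homogeneousComponent e (monomial m c)) := by
  rw [homogeneousComponent_of_mem (isHomogeneous_monomial c rfl)]
  split_ifs with he
  · subst he
    rw [bind₁_monomial, bind₁_monomial, homogeneousComponent_C_mul, Finsupp.degree_apply,
      Finset.mul_sum, homogeneousComponent_sum_prod_of_totalDegree_le _ fun i _ =>
        totalDegree_pow_le_mul (hf i) _]
    simp only [homogeneousComponent_mul_pow_of_totalDegree_le (hf _)]
  · rw [map_zero]
    refine homogeneousComponent_eq_zero _ _ ((totalDegree_bind₁_monomial_le hf m c).trans_lt ?_)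
    exact Nat.mul_lt_mul_of_pos_left (lt_of_le_of_ne hm (Ne.symm he)) hd

theorem homogeneousComponent_mul_bind₁_of_totalDegree_le (hd : 0 < d)
    (hf : ∀ i, (f i).totalDegree ≤ d) {p : MvPolynomial σ R} {e : ℕ} (hp : p.totalDegree ≤ e) :
    homogeneousComponent (d * e) (bind₁ f p) =
      bind₁ (fun i => homogeneousComponent d (f i)) (homogeneousComponent e p) := by
  conv_lhs => rw [← support_sum_monomial_coeff p]
  conv_rhs => rw [← support_sum_monomial_coeff p]
  simp only [map_sum]
  exact Finset.sum_congr rfl fun m hm =>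
    homogeneousComponent_mul_bind₁_monomial_of_degree_le hd hf ((le_totalDegree hm).trans hp) _

end MvPolynomial

theorem totalDegree_le_mvDeg {k : Type*} [CommSemiring k] {n : ℕ}
    (f : Fin n → MvPolynomial (Fin n) k) (i : Fin n) : (f i).totalDegree ≤ mvDeg f :=
  Finset.le_sup (f := fun i => (f i).totalDegree) (Finset.mem_univ i)

theorem bind₁_topPart_topPart_eq_zero {k : Type*} [CommSemiring k] {n : ℕ}
    {f g : Fin n → MvPolynomial (Fin n) k} (hfg : ∀ i, bind₁ f (g i) = X i)
    (hf : 2 ≤ mvDeg f) (j : Fin n) : bind₁ (topPart f) (topPart g j) = 0 := by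
  have hdeg : mvDeg f * mvDeg g ≠ 1 := fun h => by
    have := Nat.eq_one_of_mul_eq_one_right h
    omega
  unfold topPart
  rw [← homogeneousComponent_mul_bind₁_of_totalDegree_le (by omega) (totalDegree_le_mvDeg f)
    (totalDegree_le_mvDeg g j), hfg, homogeneousComponent_of_mem (isHomogeneous_X k j),
    if_neg hdeg]

theorem stmt_13_general (k : Type*) [Field k] (n : ℕ)
    (f finv : Fin n → MvPolynomial (Fin n) k)
    (hf1 : ∀ i, MvPolynomial.bind₁ f (finv i) = MvPolynomial.X i)
    (hdf : 2 ≤ mvDeg f) :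
    -- `X_f ⊆ I_{f⁻¹}` : the image at infinity of `f` lies in the
    -- indeterminacy locus of `f⁻¹`
    ∀ y : Fin n → k, (∃ i, MvPolynomial.eval y (topPart f i) ≠ 0) →
      ∀ j, MvPolynomial.eval (fun i => MvPolynomial.eval y (topPart f i))
        (topPart finv j) = 0 := by
  intro y _ j
  calc eval (fun i => eval y (topPart f i)) (topPart finv j)
      = eval y (bind₁ (topPart f) (topPart finv j)) := (eval₂Hom_bind₁ _ _ _ _).symm
    _ = 0 := by rw [bind₁_topPart_topPart_eq_zero hf1 hdf j, map_zero]

theorem stmt_13 (k : Type*) [Field k] (n : ℕ)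
    (f finv : Fin n → MvPolynomial (Fin n) k)
    (hf1 : ∀ i, MvPolynomial.bind₁ f (finv i) = MvPolynomial.X i)
    (hf2 : ∀ i, MvPolynomial.bind₁ finv (f i) = MvPolynomial.X i)
    (hdf : 2 ≤ mvDeg f) :
    -- `X_f ⊆ I_{f⁻¹}` : the image at infinity of `f` lies in the
    -- indeterminacy locus of `f⁻¹`
    ∀ y : Fin n → k, (∃ i, MvPolynomial.eval y (topPart f i) ≠ 0) →
      ∀ j, MvPolynomial.eval (fun i => MvPolynomial.eval y (topPart f i))
        (topPart finv j) = 0 :=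
  stmt_13_general k n f finv hf1 hdf
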